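/- Let μ > 0. Then for every x ∈ [π/2, π], the derivative of the solution ω₂ satisfies ω₂'(x,μ) = (1/δ)·cos(μ(x − π/2))·ω₁'(π/2, μ) − (μ/δ)·sin(μ(x − π/2))·ω₁(π/2, μ) − ∫_{π/2}^{x} q(θ)·cos(μ(x − θ))·ω₂(θ − Δ(θ), μ) dθ. -/

import Mathlib

open Real Set

/-!
Variation of constants: for fixed `x`, the function
`θ ↦ cos (μ (x - θ)) ω₂' θ - μ sin (μ (x - θ)) ω₂ θ` has derivative
`cos (μ (x - θ)) (ω₂'' θ + μ² ω₂ θ)`, which by the equation is `-q θ cos (μ (x - θ)) ω₂ (θ - Δ θ)`.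
Integrating from `π/2` to `x` and inserting the interface conditions gives the formula.
-/

section VariationOfConstants

variable {a b μ x : ℝ} {y y' y'' : ℝ → ℝ}

theorem hasDerivAt_cos_mul_deriv_sub_sin_mul {t : ℝ}
    (hy : HasDerivAt y (y' t) t) (hy' : HasDerivAt y' (y'' t) t) :
    HasDerivAt (fun θ => cos (μ * (x - θ)) * y' θ - μ * sin (μ * (x - θ)) * y θ)
      (cos (μ * (x - t)) * (y'' t + μ ^ 2 * y t)) t := by
  have hinner : HasDerivAt (fun θ => μ * (x - θ)) (-μ) t := by
    simpa using ((hasDerivAt_id t).const_sub x).const_mul μ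
  have hcos : HasDerivAt (fun θ => cos (μ * (x - θ))) (-sin (μ * (x - t)) * -μ) t :=
    (hasDerivAt_cos _).comp t hinner
  have hsin : HasDerivAt (fun θ => sin (μ * (x - θ))) (cos (μ * (x - t)) * -μ) t :=
    (hasDerivAt_sin _).comp t hinner
  exact ((hcos.mul hy').sub ((hsin.const_mul μ).mul hy)).congr_deriv (by ring)

theorem deriv_eq_cos_mul_sub_sin_mul_add_integral
    (hy : ∀ t ∈ Icc a b, HasDerivWithinAt y (y' t) (Icc a b) t)
    (hy' : ∀ t ∈ Icc a b, HasDerivWithinAt y' (y'' t) (Icc a b) t)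
    (hy'' : ContinuousOn y'' (Icc a b)) (hx : x ∈ Icc a b) :
    y' x = cos (μ * (x - a)) * y' a - μ * sin (μ * (x - a)) * y a
      + ∫ θ in a..x, cos (μ * (x - θ)) * (y'' θ + μ ^ 2 * y θ) := by
  have hsub : Icc a x ⊆ Icc a b := Icc_subset_Icc_right hx.2
  have hcont_y : ContinuousOn y (Icc a b) := fun t ht => (hy t ht).continuousWithinAt
  have hcont_y' : ContinuousOn y' (Icc a b) := fun t ht => (hy' t ht).continuousWithinAt
  have hderiv : ∀ t ∈ Ioo a x, HasDerivAt
      (fun θ => cos (μ * (x - θ)) * y' θ - μ * sin (μ * (x - θ)) * y θ)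
      (cos (μ * (x - t)) * (y'' t + μ ^ 2 * y t)) t := by
    intro t ht
    have hnhds : Icc a b ∈ nhds t := Icc_mem_nhds ht.1 (ht.2.trans_le hx.2)
    have ht' : t ∈ Icc a b := hsub (Ioo_subset_Icc_self ht)
    exact hasDerivAt_cos_mul_deriv_sub_sin_mul ((hy t ht').hasDerivAt hnhds)
      ((hy' t ht').hasDerivAt hnhds)
  have hint : IntervalIntegrable (fun θ => cos (μ * (x - θ)) * (y'' θ + μ ^ 2 * y θ))
      MeasureTheory.volume a x := by
    apply ContinuousOn.intervalIntegrable
    rw [uIcc_of_le hx.1]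
    have := hcont_y.mono hsub
    have := hy''.mono hsub
    fun_prop
  have hcont : ContinuousOn
      (fun θ => cos (μ * (x - θ)) * y' θ - μ * sin (μ * (x - θ)) * y θ) (Icc a x) := by
    have := hcont_y.mono hsub
    have := hcont_y'.mono hsub
    fun_prop
  have hftc := intervalIntegral.integral_eq_sub_of_hasDerivAt_of_le hx.1 hcont hderiv hint
  simp only [sub_self, mul_zero, cos_zero, sin_zero, one_mul, zero_mul, sub_zero] at hftc
  linarith

end VariationOfConstants

theorem stmt3_general
    (δ : ℝ)
    (q Δ : ℝ → ℝ)
    (μ : ℝ)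
    (ω₁ ω₁d : ℝ → ℝ)
    (ω₂ ω₂d ω₂dd : ℝ → ℝ)
    (hder1' : ∀ x ∈ Icc (π/2) π, HasDerivWithinAt ω₂ (ω₂d x) (Icc (π/2) π) x)
    (hder2' : ∀ x ∈ Icc (π/2) π, HasDerivWithinAt ω₂d (ω₂dd x) (Icc (π/2) π) x)
    (hcont' : ContinuousOn ω₂dd (Icc (π/2) π))
    (hode' : ∀ x ∈ Icc (π/2) π, ω₂dd x + q x * ω₂ (x - Δ x) = -μ^2 * ω₂ x)
    (hifc : ω₂ (π/2) = δ⁻¹ * ω₁ (π/2))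
    (hifc' : ω₂d (π/2) = δ⁻¹ * ω₁d (π/2)) :
    ∀ x ∈ Icc (π/2) π,
      ω₂d x = (1/δ) * Real.cos (μ * (x - π/2)) * ω₁d (π/2)
        - (μ/δ) * Real.sin (μ * (x - π/2)) * ω₁ (π/2)
        - ∫ θ in (π/2)..x, q θ * Real.cos (μ * (x - θ)) * ω₂ (θ - Δ θ) := by
  intro x hx
  have hforcing : ∫ θ in (π/2)..x, cos (μ * (x - θ)) * (ω₂dd θ + μ ^ 2 * ω₂ θ)
      = -∫ θ in (π/2)..x, q θ * cos (μ * (x - θ)) * ω₂ (θ - Δ θ) := by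
    rw [← intervalIntegral.integral_neg]
    refine intervalIntegral.integral_congr fun θ hθ => ?_
    rw [uIcc_of_le hx.1] at hθ
    linear_combination cos (μ * (x - θ)) * hode' θ (Icc_subset_Icc_right hx.2 hθ)
  rw [deriv_eq_cos_mul_sub_sin_mul_add_integral hder1' hder2' hcont' hx, hforcing, hifc, hifc']
  ring

theorem stmt3
    (a₁ a₁' a₂ a₂' b δ : ℝ) (hδ : δ ≠ 0) (ha₂' : a₂' ≠ 0)
    (q Δ : ℝ → ℝ)
    (hq1 : ContinuousOn q (Ico 0 (π/2))) (hq2 : ContinuousOn q (Ioc (π/2) π))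
    (hqlim1 : ∃ L : ℝ, Filter.Tendsto q (nhdsWithin (π/2) (Iio (π/2))) (nhds L))
    (hqlim2 : ∃ L : ℝ, Filter.Tendsto q (nhdsWithin (π/2) (Ioi (π/2))) (nhds L))
    (hΔ1 : ContinuousOn Δ (Ico 0 (π/2))) (hΔ2 : ContinuousOn Δ (Ioc (π/2) π))
    (hΔlim1 : ∃ L : ℝ, Filter.Tendsto Δ (nhdsWithin (π/2) (Iio (π/2))) (nhds L))
    (hΔlim2 : ∃ L : ℝ, Filter.Tendsto Δ (nhdsWithin (π/2) (Ioi (π/2))) (nhds L))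
    (hΔ0 : ∀ x, 0 ≤ Δ x)
    (hret1 : ∀ x ∈ Ico 0 (π/2), 0 ≤ x - Δ x)
    (hret2 : ∀ x ∈ Ioc (π/2) π, π/2 ≤ x - Δ x)
    (μ : ℝ) (hμ : 0 < μ)
    (ω₁ ω₁d ω₁dd : ℝ → ℝ)
    (hder1 : ∀ x ∈ Icc 0 (π/2), HasDerivWithinAt ω₁ (ω₁d x) (Icc 0 (π/2)) x)
    (hder2 : ∀ x ∈ Icc 0 (π/2), HasDerivWithinAt ω₁d (ω₁dd x) (Icc 0 (π/2)) x)
    (hcont : ContinuousOn ω₁dd (Icc 0 (π/2)))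
    (hode : ∀ x ∈ Icc 0 (π/2), ω₁dd x + q x * ω₁ (x - Δ x) = -μ^2 * ω₁ x)
    (hinit : ω₁ 0 = μ * a₂' + a₂)
    (hinit' : ω₁d 0 = μ * a₁' + a₁)
    (ω₂ ω₂d ω₂dd : ℝ → ℝ)
    (hder1' : ∀ x ∈ Icc (π/2) π, HasDerivWithinAt ω₂ (ω₂d x) (Icc (π/2) π) x)
    (hder2' : ∀ x ∈ Icc (π/2) π, HasDerivWithinAt ω₂d (ω₂dd x) (Icc (π/2) π) x)
    (hcont' : ContinuousOn ω₂dd (Icc (π/2) π))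
    (hode' : ∀ x ∈ Icc (π/2) π, ω₂dd x + q x * ω₂ (x - Δ x) = -μ^2 * ω₂ x)
    (hifc : ω₂ (π/2) = δ⁻¹ * ω₁ (π/2))
    (hifc' : ω₂d (π/2) = δ⁻¹ * ω₁d (π/2)) :
    ∀ x ∈ Icc (π/2) π,
      ω₂d x = (1/δ) * Real.cos (μ * (x - π/2)) * ω₁d (π/2)
        - (μ/δ) * Real.sin (μ * (x - π/2)) * ω₁ (π/2)
        - ∫ θ in (π/2)..x, q θ * Real.cos (μ * (x - θ)) * ω₂ (θ - Δ θ) :=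
  stmt3_general δ q Δ μ ω₁ ω₁d ω₂ ω₂d ω₂dd hder1' hder2' hcont' hode' hifc hifc'
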